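/- Let {A^(j)} and {B^(j)} be projective matrix systems over the same sequence of finite nonempty level sets (Br_j) with Br_0 = {v_0}. Set L_j = √(#Br_j) · max_{w ∈ Br_j} ((A^(1) A^(2) ⋯ A^(j))_{v_0,w})^{-1}. Suppose ε_k ∈ (0,1) for all k and there is N ∈ ℕ such that ε_k ≤ 2^{-k} (L_k ∏_{j=1}^{k-1} (‖A^(j)‖ + 1))^{-1} for all k ≥ N; suppose (B^(1) B^(2) ⋯ B^(j))_{v_0,w} ≥ (A^(1) A^(2) ⋯ A^(j))_{v_0,w} for all w ∈ Br_j and all j ≥ 1; and suppose ‖A^(j) − B^(j)‖ ≤ ε_j for all j ≥ N. Then the map T : lim_j A^(j) → lim_j B^(j) defined by (Tψ)^{j-1} = lim_{k→∞} B^(j) B^(j+1) ⋯ B^(j+k) ψ^{j+k} is an affine homeomorphism, i.e. a homeomorphism preserving convex combinations. -/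

import Mathlib

open scoped BigOperators
noncomputable section

open Classical in
/-- The matrix product `(A^(1) A^(2) ⋯ A^(k))_{v,w}`; here `A n` is the matrix
`A^(n+1)` of a projective matrix system, from level `n` to level `n+1`. -/
def pathMat {L : ℕ → Type} [∀ n, Fintype (L n)]
    (A : ∀ n, L n → L (n+1) → ℝ) : ∀ k, L 0 → L k → ℝ
  | 0, v, w => if v = w then 1 else 0
  | (k+1), v, w => ∑ u, pathMat A k v u * A k u w

/-- The inverse limit `lim_j A^(j)` of a projective matrix system. -/
def InvLimit {L : ℕ → Type} [∀ n, Fintype (L n)]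
    (A : ∀ n, L n → L (n+1) → ℝ) : Set (∀ n, L n → ℝ) :=
  {ψ | (∀ n v, 0 ≤ ψ n v) ∧ ∀ n v, ψ n v = ∑ w, A n v w * ψ (n+1) w}

/-- A projective matrix system: nonnegative entries and
`(A^(1) ⋯ A^(k))_{v₀,w} ≠ 0` for all `k` and `w`. -/
def IsProjSystem {L : ℕ → Type} [∀ n, Fintype (L n)] (v0 : L 0)
    (A : ∀ n, L n → L (n+1) → ℝ) : Prop :=
  (∀ n v w, 0 ≤ A n v w) ∧ ∀ k (w : L k), pathMat A k v0 w ≠ 0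

/-- The Euclidean (`ℓ²`) norm of a vector. -/
def euclEnorm {X : Type} [Fintype X] (ψ : X → ℝ) : ℝ := Real.sqrt (∑ x, ψ x ^ 2)

/-- Operator norm of a matrix with respect to the Euclidean norms. -/
def opNorm {X Y : Type} [Fintype X] [Fintype Y] (M : X → Y → ℝ) : ℝ :=
  ⨆ ψ : {ψ : Y → ℝ // euclEnorm ψ ≤ 1}, euclEnorm fun x => ∑ y, M x y * ψ.val y

/-- `applyChain B n k ψ = B^(n+1) B^(n+2) ⋯ B^(n+k) ψ` for `ψ ∈ ℝ^{Br_{n+k}}`. -/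
def applyChain {L : ℕ → Type} [∀ n, Fintype (L n)]
    (B : ∀ n, L n → L (n+1) → ℝ) (n : ℕ) : ∀ k, (L (n+k) → ℝ) → (L n → ℝ)
  | 0, ψ => ψ
  | k+1, ψ => applyChain B n k fun v => ∑ w, B (n+k) v w * ψ w

/-- The constant `L_j = √(#Br_j) · max_w ((A^(1)⋯A^(j))_{v₀,w})⁻¹` of Lemma 5.2. -/
def Lconst {L : ℕ → Type} [∀ n, Fintype (L n)] (v0 : L 0)
    (A : ∀ n, L n → L (n+1) → ℝ) (j : ℕ) : ℝ :=
  Real.sqrt (Fintype.card (L j) : ℝ) * ⨆ w : L j, (pathMat A j v0 w)⁻¹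

/-!
Write `T ψ` for the limit of the chains `B^(n+1) ⋯ B^(n+k) ψ^(n+k)`. Consecutive chains differ by
`B^(n+1) ⋯ B^(n+k) (B^(n+k+1) - A^(n+k+1)) ψ^(n+k+1)`. Every point of either inverse limit obeys
`‖ψ^j‖ ≤ L_j ψ^0(v₀)`, because `(A^(1) ⋯ A^(j))_{v₀,w} ψ^j(w) ≤ (B^(1) ⋯ B^(j))_{v₀,w} ψ^j(w)
≤ ψ^0(v₀)`; and `‖B^(j)‖ ≤ ‖A^(j)‖ + 1` for large `j`. With the choice of `ε_k` the increment is
therefore at most `C ψ^0(v₀) 2^{-(n+k+1)}`, so the chains converge geometrically, uniformly where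
`ψ^0(v₀)` is bounded (continuity of `T`), and linearly in `ψ` (affinity of `T`). The same estimate
for the mixed chains `A^(n+1) ⋯ A^(n+k) B^(n+k+1) ⋯ B^(n+k+i) ψ^(n+k+i)`, which start at `ψ^n`,
shows that the map `S` built from `A` in the same way inverts `T`, and symmetrically.
-/

open Filter Topology Finset Matrix

section EuclideanNorms

variable {X Y : Type} [Fintype X] [Fintype Y]

lemma euclEnorm_eq_norm (φ : X → ℝ) : euclEnorm φ = ‖WithLp.toLp 2 φ‖ := by
  simp [euclEnorm, EuclideanSpace.norm_eq]

lemma euclEnorm_nonneg (φ : X → ℝ) : 0 ≤ euclEnorm φ := Real.sqrt_nonneg _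

lemma dist_le_euclEnorm_sub (φ χ : X → ℝ) : dist φ χ ≤ euclEnorm (φ - χ) := by
  rw [euclEnorm_eq_norm, WithLp.toLp_sub, ← dist_eq_norm]
  simpa using (PiLp.lipschitzWith_ofLp 2 fun _ : X => ℝ).dist_le_mul
    (WithLp.toLp 2 φ) (WithLp.toLp 2 χ)

def mulVecL2 (M : X → Y → ℝ) : EuclideanSpace ℝ Y →L[ℝ] EuclideanSpace ℝ X :=
  LinearMap.toContinuousLinearMap <|
    (WithLp.linearEquiv 2 ℝ (X → ℝ)).symm.toLinearMap ∘ₗ Matrix.mulVecLin M ∘ₗ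
      (WithLp.linearEquiv 2 ℝ (Y → ℝ)).toLinearMap

lemma mulVecL2_toLp (M : X → Y → ℝ) (φ : Y → ℝ) :
    mulVecL2 M (WithLp.toLp 2 φ) = WithLp.toLp 2 (M *ᵥ φ) := rfl

lemma mulVecL2_sub (M M' : X → Y → ℝ) : mulVecL2 (M - M') = mulVecL2 M - mulVecL2 M' := by
  ext φ x
  exact congrFun (sub_mulVec (M : Matrix X Y ℝ) M' (WithLp.ofLp φ)) x

lemma opNorm_eq_norm_mulVecL2 (M : X → Y → ℝ) : opNorm M = ‖mulVecL2 M‖ := by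
  rw [← (mulVecL2 M).sSup_unitClosedBall_eq_norm, sSup_image']
  let e : {ψ : Y → ℝ // euclEnorm ψ ≤ 1} ≃ Metric.closedBall (0 : EuclideanSpace ℝ Y) 1 :=
    { toFun := fun ψ => ⟨WithLp.toLp 2 ψ.1, by simpa [euclEnorm_eq_norm] using ψ.2⟩
      invFun := fun x => ⟨WithLp.ofLp x.1, by
        rw [euclEnorm_eq_norm]; exact mem_closedBall_zero_iff.1 x.2⟩
      left_inv := fun _ => rfl
      right_inv := fun _ => rfl }
  unfold opNorm
  rw [← e.iSup_comp]
  exact iSup_congr fun ψ => euclEnorm_eq_norm _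

lemma opNorm_nonneg (M : X → Y → ℝ) : 0 ≤ opNorm M := by
  rw [opNorm_eq_norm_mulVecL2]; exact norm_nonneg _

lemma euclEnorm_mulVec_le (M : X → Y → ℝ) (φ : Y → ℝ) :
    euclEnorm (M *ᵥ φ) ≤ opNorm M * euclEnorm φ := by
  rw [euclEnorm_eq_norm, euclEnorm_eq_norm, opNorm_eq_norm_mulVecL2, ← mulVecL2_toLp]
  exact (mulVecL2 M).le_opNorm _

lemma opNorm_sub_comm (M M' : X → Y → ℝ) : opNorm (M - M') = opNorm (M' - M) := by
  simp only [opNorm_eq_norm_mulVecL2, mulVecL2_sub, norm_sub_rev]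

lemma opNorm_le_add_opNorm_sub (M M' : X → Y → ℝ) : opNorm M' ≤ opNorm M + opNorm (M - M') := by
  simp only [opNorm_eq_norm_mulVecL2, mulVecL2_sub]
  simpa using norm_sub_le (mulVecL2 M) (mulVecL2 M - mulVecL2 M')

lemma euclEnorm_le_sqrt_card_mul {φ : X → ℝ} {b : ℝ} (hb : 0 ≤ b) (hφ : ∀ x, |φ x| ≤ b) :
    euclEnorm φ ≤ Real.sqrt (Fintype.card X) * b := by
  rw [← Real.sqrt_sq hb, ← Real.sqrt_mul (Nat.cast_nonneg _)]
  refine Real.sqrt_le_sqrt ?_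
  calc ∑ x, φ x ^ 2 ≤ ∑ _x : X, b ^ 2 :=
        sum_le_sum fun x _ => sq_le_sq' (abs_le.1 (hφ x)).1 (abs_le.1 (hφ x)).2
    _ = _ := by simp

end EuclideanNorms

section Chains

variable {L : ℕ → Type} [∀ n, Fintype (L n)] {M : ∀ n, L n → L (n+1) → ℝ}

def applyChainLin (M : ∀ n, L n → L (n+1) → ℝ) (n : ℕ) :
    ∀ k, (L (n+k) → ℝ) →ₗ[ℝ] (L n → ℝ)
  | 0 => LinearMap.id
  | k+1 => applyChainLin M n k ∘ₗ Matrix.mulVecLin (M (n+k))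

lemma applyChain_succ (n k : ℕ) (φ : L (n+(k+1)) → ℝ) :
    applyChain M n (k+1) φ = applyChain M n k (M (n+k) *ᵥ φ) := rfl

lemma coe_applyChainLin (n k : ℕ) : ⇑(applyChainLin M n k) = applyChain M n k := by
  induction k with
  | zero => rfl
  | succ k ih =>
    ext φ : 1
    simp only [applyChainLin, LinearMap.coe_comp, Function.comp_apply, ih]
    rfl

lemma applyChain_sub (n k : ℕ) (φ χ : L (n+k) → ℝ) :
    applyChain M n k (φ - χ) = applyChain M n k φ - applyChain M n k χ := by
  simp only [← coe_applyChainLin, map_sub]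

lemma applyChain_add_smul (n k : ℕ) (s t : ℝ) (φ χ : L (n+k) → ℝ) :
    applyChain M n k (s • φ + t • χ) = s • applyChain M n k φ + t • applyChain M n k χ := by
  simp only [← coe_applyChainLin, map_add, map_smul]

lemma continuous_applyChain (n k : ℕ) : Continuous (applyChain M n k) := by
  rw [← coe_applyChainLin]; exact LinearMap.continuous_of_finiteDimensional _

lemma applyChain_succ_left (n k : ℕ) (ψ : ∀ m, L m → ℝ) :
    applyChain M n (k+1) (ψ (n+(k+1))) = M n *ᵥ applyChain M (n+1) k (ψ (n+1+k)) := by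
  induction k generalizing ψ with
  | zero => rfl
  | succ k ih => exact ih fun m => M m *ᵥ ψ (m+1)

lemma applyChain_nonneg (hM : ∀ n v w, 0 ≤ M n v w) (n k : ℕ) {φ : L (n+k) → ℝ} (hφ : 0 ≤ φ) :
    0 ≤ applyChain M n k φ := by
  induction k with
  | zero => exact hφ
  | succ k ih =>
    exact ih fun v => sum_nonneg fun w _ => mul_nonneg (hM _ v w) (hφ w)

lemma euclEnorm_applyChain_le (n k : ℕ) (φ : L (n+k) → ℝ) :
    euclEnorm (applyChain M n k φ) ≤ (∏ i ∈ range k, opNorm (M (n+i))) * euclEnorm φ := by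
  induction k with
  | zero => simp [applyChain]
  | succ k ih =>
    calc euclEnorm (applyChain M n (k+1) φ)
        ≤ (∏ i ∈ range k, opNorm (M (n+i))) * euclEnorm (M (n+k) *ᵥ φ) := ih _
      _ ≤ (∏ i ∈ range k, opNorm (M (n+i))) * (opNorm (M (n+k)) * euclEnorm φ) := by
        gcongr
        · exact prod_nonneg fun i _ => opNorm_nonneg _
        · exact euclEnorm_mulVec_le _ _
      _ = _ := by rw [prod_range_succ, mul_assoc]

end Chains

section InverseLimit

variable {L : ℕ → Type} [∀ n, Fintype (L n)] {M : ∀ n, L n → L (n+1) → ℝ}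
  {ψ : ∀ n, L n → ℝ}

lemma mulVec_eq_of_mem_invLimit (hψ : ψ ∈ InvLimit M) (n : ℕ) : M n *ᵥ ψ (n+1) = ψ n :=
  funext fun v => (hψ.2 n v).symm

lemma applyChain_eq_of_mem_invLimit (hψ : ψ ∈ InvLimit M) (n k : ℕ) :
    applyChain M n k (ψ (n+k)) = ψ n := by
  induction k with
  | zero => rfl
  | succ k ih => exact (congrArg _ (mulVec_eq_of_mem_invLimit hψ (n+k))).trans ih

lemma pathMat_succ_mulVec (k : ℕ) (φ : L (k+1) → ℝ) :
    pathMat M (k+1) *ᵥ φ = pathMat M k *ᵥ (M k *ᵥ φ) :=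
  (mulVec_mulVec φ (pathMat M k) (M k)).symm

lemma pathMat_mulVec_eq_of_mem_invLimit (hψ : ψ ∈ InvLimit M) (k : ℕ) :
    pathMat M k *ᵥ ψ k = ψ 0 := by
  induction k with
  | zero =>
    ext v
    change ∑ u, pathMat M 0 v u * ψ 0 u = ψ 0 v
    rw [sum_eq_single v (fun u _ hu => by simp [pathMat, Ne.symm hu])
      (by simp)]
    simp [pathMat]
  | succ k ih => rw [pathMat_succ_mulVec, mulVec_eq_of_mem_invLimit hψ, ih]

lemma pathMat_nonneg (hM : ∀ n v w, 0 ≤ M n v w) (k : ℕ) (v : L 0) (w : L k) :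
    0 ≤ pathMat M k v w := by
  induction k with
  | zero => by_cases h : v = w <;> simp [pathMat, h]
  | succ k ih => exact sum_nonneg fun u _ => mul_nonneg (ih u) (hM k u w)

variable {v0 : L 0} {A : ∀ n, L n → L (n+1) → ℝ}

lemma le_mul_inv_pathMat_of_mem_invLimit (hA : IsProjSystem v0 A) (hM : ∀ n v w, 0 ≤ M n v w)
    (hAM : ∀ k (w : L k), pathMat A k v0 w ≤ pathMat M k v0 w) (hψ : ψ ∈ InvLimit M)
    (k : ℕ) (w : L k) : ψ k w ≤ ψ 0 v0 * (pathMat A k v0 w)⁻¹ := by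
  have hpos : 0 < pathMat A k v0 w :=
    (pathMat_nonneg hA.1 k v0 w).lt_of_ne (hA.2 k w).symm
  rw [← div_eq_mul_inv, le_div_iff₀ hpos]
  calc ψ k w * pathMat A k v0 w ≤ pathMat M k v0 w * ψ k w := by
        rw [mul_comm]; exact mul_le_mul_of_nonneg_right (hAM k w) (hψ.1 k w)
    _ ≤ ∑ u, pathMat M k v0 u * ψ k u :=
        single_le_sum (fun u _ => mul_nonneg (pathMat_nonneg hM k v0 u) (hψ.1 k u)) (mem_univ w)
    _ = ψ 0 v0 := congrFun (pathMat_mulVec_eq_of_mem_invLimit hψ k) v0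

lemma euclEnorm_le_Lconst_mul (hA : IsProjSystem v0 A) (hM : ∀ n v w, 0 ≤ M n v w)
    (hAM : ∀ k (w : L k), pathMat A k v0 w ≤ pathMat M k v0 w) (hψ : ψ ∈ InvLimit M)
    (k : ℕ) : euclEnorm (ψ k) ≤ Lconst v0 A k * ψ 0 v0 := by
  have hsup : 0 ≤ ⨆ u : L k, (pathMat A k v0 u)⁻¹ :=
    Real.iSup_nonneg fun u => inv_nonneg.2 (pathMat_nonneg hA.1 k v0 u)
  rw [Lconst, mul_assoc]
  refine euclEnorm_le_sqrt_card_mul (mul_nonneg hsup (hψ.1 0 v0)) fun w => ?_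
  rw [abs_of_nonneg (hψ.1 k w), mul_comm]
  exact (le_mul_inv_pathMat_of_mem_invLimit hA hM hAM hψ k w).trans <|
    mul_le_mul_of_nonneg_left
      (le_ciSup (f := fun u => (pathMat A k v0 u)⁻¹) (Set.finite_range _).bddAbove w) (hψ.1 0 v0)

end InverseLimit

lemma exists_tendsto_dist_le_of_dist_succ_le {E : Type*} [MetricSpace E] [CompleteSpace E]
    {F : ℕ → E} {c : ℝ} {i₀ : ℕ} (hF : ∀ i ≥ i₀, dist (F i) (F (i+1)) ≤ c * 2⁻¹ ^ i) :
    ∃ x, Tendsto F atTop (𝓝 x) ∧ ∀ i ≥ i₀, dist (F i) x ≤ 2 * c * 2⁻¹ ^ i := by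
  have hshift : ∀ i ≥ i₀, ∀ j, dist (F (j+i)) (F (j+1+i)) ≤ c * 2⁻¹ ^ i * 2⁻¹ ^ j := by
    intro i hi j
    rw [add_right_comm, mul_assoc, ← pow_add, add_comm i]
    exact hF _ (le_add_left hi)
  obtain ⟨x, hx⟩ := cauchySeq_tendsto_of_complete <|
    cauchySeq_of_le_geometric (2⁻¹ : ℝ) _ (by norm_num) (hshift i₀ le_rfl)
  have hFx : Tendsto F atTop (𝓝 x) := (tendsto_add_atTop_iff_nat i₀).1 hx
  refine ⟨x, hFx, fun i hi => ?_⟩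
  have := dist_le_of_le_geometric_of_tendsto₀ (2⁻¹ : ℝ) _ (by norm_num) (hshift i hi)
    ((tendsto_add_atTop_iff_nat i).2 hFx)
  rw [zero_add] at this
  convert this using 1
  ring

lemma continuous_of_dist_le_mul {X E : Type*} [TopologicalSpace X] [MetricSpace E]
    {F : ℕ → X → E} {G : X → E} {b : X → ℝ} {r : ℕ → ℝ} {k₀ : ℕ}
    (hF : ∀ k, Continuous (F k)) (hb : Continuous b) (hr₀ : ∀ k, 0 ≤ r k)
    (hr : Tendsto r atTop (𝓝 0)) (hFG : ∀ k ≥ k₀, ∀ x, dist (F k x) (G x) ≤ b x * r k) :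
    Continuous G := by
  refine (?_ : TendstoLocallyUniformly F G atTop).continuous (Frequently.of_forall hF)
  rw [Metric.tendstoLocallyUniformly_iff]
  intro δ hδ x
  refine ⟨{y | b y < b x + 1}, (isOpen_lt hb continuous_const).mem_nhds (lt_add_one (b x)), ?_⟩
  have hr' : Tendsto (fun k => (b x + 1) * r k) atTop (𝓝 0) := by
    simpa using hr.const_mul (b x + 1)
  filter_upwards [eventually_ge_atTop k₀, hr'.eventually (gt_mem_nhds hδ)] with k hk hsmall y hy
  calc dist (G y) (F k y) ≤ b y * r k := dist_comm (F k y) (G y) ▸ hFG k hk y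
    _ ≤ (b x + 1) * r k := mul_le_mul_of_nonneg_right (le_of_lt hy) (hr₀ k)
    _ < δ := hsmall

lemma tendsto_of_dist_le_mul_two_inv_pow {E : Type*} [PseudoMetricSpace E] {F : ℕ → E} {x : E}
    {c : ℝ} {k₀ : ℕ} (h : ∀ k ≥ k₀, dist (F k) x ≤ c * 2⁻¹ ^ k) : Tendsto F atTop (𝓝 x) := by
  rw [tendsto_iff_dist_tendsto_zero]
  refine squeeze_zero' (Eventually.of_forall fun _ => dist_nonneg)
    ((eventually_ge_atTop k₀).mono h) ?_
  simpa using (tendsto_pow_atTop_nhds_zero_of_lt_one (by norm_num : (0:ℝ) ≤ 2⁻¹)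
    (by norm_num)).const_mul c

lemma prod_range_add_mul_prod_range_le {h : ℕ → ℝ} (hh : ∀ j, 1 ≤ h j) (n k i : ℕ) :
    (∏ l ∈ range k, h (n+l)) * ∏ l ∈ range i, h (n+k+l) ≤ ∏ j ∈ range (n+k+i), h j := by
  rw [prod_range_add, prod_range_add, mul_assoc]
  exact le_mul_of_one_le_left (mul_nonneg (prod_nonneg fun j _ => zero_le_one.trans (hh _))
    (prod_nonneg fun j _ => zero_le_one.trans (hh _))) (one_le_prod fun j _ => hh j)

section TailControl

variable {L : ℕ → Type} [∀ n, Fintype (L n)]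

/-- For `M = B` this is the map `T` of the theorem, for `M = A` its inverse. -/
def chainLimit (M : ∀ n, L n → L (n+1) → ℝ) (ψ : ∀ n, L n → ℝ) : ∀ n, L n → ℝ :=
  fun n => limUnder atTop fun k => applyChain M n k (ψ (n+k))

/-- The increment `M^(n+1) ⋯ M^(m) (M^(m+1) - M'^(m+1)) ψ^(m+1)` of the chains of `M` applied
to `ψ ∈ lim M'` is controlled through weights `h` dominating the norms of both systems. -/
structure IsTailControlled (v0 : L 0) (M M' : ∀ n, L n → L (n+1) → ℝ) (h : ℕ → ℝ) (C : ℝ)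
    (N : ℕ) : Prop where
  one_le_weight : ∀ j, 1 ≤ h j
  opNorm_le : ∀ j, opNorm (M j) ≤ h j
  opNorm_le' : ∀ j, opNorm (M' j) ≤ h j
  tail : ∀ ψ ∈ InvLimit M', ∀ m, N ≤ m + 1 →
    (∏ j ∈ range m, h j) * opNorm (M m - M' m) * euclEnorm (ψ (m+1)) ≤
      C * ψ 0 v0 * 2⁻¹ ^ (m+1)

namespace IsTailControlled

variable {v0 : L 0} {M M' : ∀ n, L n → L (n+1) → ℝ} {h : ℕ → ℝ} {C : ℝ} {N : ℕ}
  {ψ φ : ∀ n, L n → ℝ}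

lemma dist_applyChain_succ_le (hc : IsTailControlled v0 M M' h C N) (hψ : ψ ∈ InvLimit M')
    (n k i : ℕ) (hi : N ≤ n + k + i + 1) :
    dist (applyChain M' n k (applyChain M (n+k) i (ψ (n+k+i))))
      (applyChain M' n k (applyChain M (n+k) (i+1) (ψ (n+k+(i+1))))) ≤
      C * ψ 0 v0 * 2⁻¹ ^ (n+k+i+1) := by
  set m := n + k
  have hincr : applyChain M m (i+1) (ψ (m+(i+1))) - applyChain M m i (ψ (m+i)) =
      applyChain M m i ((M (m+i) - M' (m+i)) *ᵥ ψ (m+i+1)) := by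
    rw [applyChain_succ, ← mulVec_eq_of_mem_invLimit hψ (m+i), ← applyChain_sub]
    exact congrArg _ (sub_mulVec _ _ _).symm
  have hnorm : ∀ (P : ∀ n, L n → L (n+1) → ℝ), (∀ j, opNorm (P j) ≤ h j) →
      ∀ a b, ∏ l ∈ range b, opNorm (P (a+l)) ≤ ∏ l ∈ range b, h (a+l) := fun P hP a b =>
    prod_le_prod (fun _ _ => opNorm_nonneg _) fun _ _ => hP _
  have hdiff : 0 ≤ opNorm (M (m+i) - M' (m+i)) * euclEnorm (ψ (m+i+1)) :=
    mul_nonneg (opNorm_nonneg _) (euclEnorm_nonneg _)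
  rw [dist_comm]
  calc _ ≤ euclEnorm (applyChain M' n k (applyChain M m (i+1) (ψ (m+(i+1)))) -
          applyChain M' n k (applyChain M m i (ψ (m+i)))) := dist_le_euclEnorm_sub _ _
    _ = euclEnorm (applyChain M' n k (applyChain M m i ((M (m+i) - M' (m+i)) *ᵥ ψ (m+i+1)))) := by
      rw [← applyChain_sub, hincr]
    _ ≤ (∏ l ∈ range k, opNorm (M' (n+l))) * ((∏ l ∈ range i, opNorm (M (m+l))) *
          (opNorm (M (m+i) - M' (m+i)) * euclEnorm (ψ (m+i+1)))) := by
      refine (euclEnorm_applyChain_le _ _ _).trans ?_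
      gcongr
      · exact prod_nonneg fun _ _ => opNorm_nonneg _
      refine (euclEnorm_applyChain_le _ _ _).trans ?_
      gcongr
      · exact prod_nonneg fun _ _ => opNorm_nonneg _
      exact euclEnorm_mulVec_le _ _
    _ ≤ (∏ l ∈ range k, h (n+l)) * ((∏ l ∈ range i, h (m+l)) *
          (opNorm (M (m+i) - M' (m+i)) * euclEnorm (ψ (m+i+1)))) :=
      mul_le_mul (hnorm M' hc.opNorm_le' n k) (mul_le_mul_of_nonneg_right (hnorm M hc.opNorm_le m i)
        hdiff) (mul_nonneg (prod_nonneg fun _ _ => opNorm_nonneg _) hdiff)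
        (prod_nonneg fun _ _ => zero_le_one.trans (hc.one_le_weight _))
    _ ≤ (∏ j ∈ range (m+i), h j) * (opNorm (M (m+i) - M' (m+i)) * euclEnorm (ψ (m+i+1))) := by
      rw [← mul_assoc]
      exact mul_le_mul_of_nonneg_right (prod_range_add_mul_prod_range_le hc.one_le_weight n k i)
        hdiff
    _ ≤ C * ψ 0 v0 * 2⁻¹ ^ (m+i+1) := by
      rw [← mul_assoc]; exact hc.tail ψ hψ (m+i) hi

lemma exists_tendsto_prefix (hc : IsTailControlled v0 M M' h C N) (hψ : ψ ∈ InvLimit M')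
    (n k : ℕ) : ∃ x, Tendsto (fun i => applyChain M' n k (applyChain M (n+k) i (ψ (n+k+i))))
      atTop (𝓝 x) ∧ ∀ i, N ≤ n + k + i + 1 →
        dist (applyChain M' n k (applyChain M (n+k) i (ψ (n+k+i)))) x ≤
          C * ψ 0 v0 * 2⁻¹ ^ (n+k+i) := by
  have hpow : ∀ i, C * ψ 0 v0 * 2⁻¹ ^ (n+k+i+1) = C * ψ 0 v0 * 2⁻¹ ^ (n+k+1) * 2⁻¹ ^ i := by
    intro i; ring
  obtain ⟨x, hx, hdist⟩ := exists_tendsto_dist_le_of_dist_succ_le (i₀ := N - (n+k+1))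
    fun i hi => (hc.dist_applyChain_succ_le hψ n k i (by omega)).trans (hpow i).le
  refine ⟨x, hx, fun i hi => (hdist i (by omega)).trans_eq ?_⟩
  ring

lemma tendsto_chainLimit (hc : IsTailControlled v0 M M' h C N) (hψ : ψ ∈ InvLimit M')
    (n : ℕ) : Tendsto (fun k => applyChain M n k (ψ (n+k))) atTop (𝓝 (chainLimit M ψ n)) := by
  obtain ⟨x, hx, -⟩ := hc.exists_tendsto_prefix hψ n 0
  have hlim : chainLimit M ψ n = x := hx.limUnder_eq
  rw [hlim]; exact hx

lemma dist_applyChain_chainLimit_le (hc : IsTailControlled v0 M M' h C N)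
    (hψ : ψ ∈ InvLimit M') (n k : ℕ) (hk : N ≤ n + k + 1) :
    dist (applyChain M n k (ψ (n+k))) (chainLimit M ψ n) ≤ C * ψ 0 v0 * 2⁻¹ ^ (n+k) := by
  obtain ⟨x, hx, hdist⟩ := hc.exists_tendsto_prefix hψ n 0
  have hlim : chainLimit M ψ n = x := hx.limUnder_eq
  rw [hlim]; exact hdist k hk

/-- The mixed chains `M'^(n+1) ⋯ M'^(n+k) M^(n+k+1) ⋯ M^(n+k+i) ψ^(n+k+i)` start at `ψ^n` and
converge to `M'^(n+1) ⋯ M'^(n+k) (chainLimit M ψ)^(n+k)`, within `C ψ^0(v₀) 2^{-(n+k)}`. -/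
lemma chainLimit_chainLimit (hc : IsTailControlled v0 M M' h C N) (hψ : ψ ∈ InvLimit M') :
    chainLimit M' (chainLimit M ψ) = ψ := by
  funext n
  refine Tendsto.limUnder_eq (tendsto_of_dist_le_mul_two_inv_pow (c := C * ψ 0 v0 * 2⁻¹ ^ n)
    (k₀ := N) fun k hk => ?_)
  obtain ⟨x, hx, hdist⟩ := hc.exists_tendsto_prefix hψ n k
  have hx' : x = applyChain M' n k (chainLimit M ψ (n+k)) :=
    tendsto_nhds_unique hx (((continuous_applyChain n k).tendsto _).comp
      (hc.tendsto_chainLimit hψ (n+k)))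
  have h0 := hdist 0 (by omega)
  change dist (applyChain M' n k (ψ (n+k))) x ≤ C * ψ 0 v0 * 2⁻¹ ^ (n+k) at h0
  rw [applyChain_eq_of_mem_invLimit hψ, hx'] at h0
  rw [mul_assoc, ← pow_add, dist_comm]
  exact h0

lemma chainLimit_mem (hc : IsTailControlled v0 M M' h C N) (hM : ∀ n v w, 0 ≤ M n v w)
    (hψ : ψ ∈ InvLimit M') : chainLimit M ψ ∈ InvLimit M := by
  refine ⟨fun n => ge_of_tendsto' (hc.tendsto_chainLimit hψ n)
    fun k => applyChain_nonneg hM n k (hψ.1 (n+k)), fun n => congrFun ?_⟩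
  refine tendsto_nhds_unique ((tendsto_add_atTop_iff_nat 1).2 (hc.tendsto_chainLimit hψ n)) ?_
  simp_rw [applyChain_succ_left]
  exact ((Matrix.mulVecLin (M n)).continuous_of_finiteDimensional.tendsto _).comp
    (hc.tendsto_chainLimit hψ (n+1))

lemma continuous_chainLimit (hc : IsTailControlled v0 M M' h C N) :
    Continuous fun ψ : InvLimit M' => chainLimit M ψ := by
  have hval : ∀ m, Continuous fun ψ : InvLimit M' => (ψ : ∀ n, L n → ℝ) m :=
    fun m => (continuous_apply m).comp continuous_subtype_val
  refine continuous_pi fun n => continuous_of_dist_le_mul (k₀ := N)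
    (F := fun k (ψ : InvLimit M') => applyChain M n k ((ψ : ∀ n, L n → ℝ) (n+k)))
    (b := fun ψ => C * (ψ : ∀ n, L n → ℝ) 0 v0 * 2⁻¹ ^ n) (r := fun k => 2⁻¹ ^ k)
    (fun k => (continuous_applyChain n k).comp (hval _))
    ((continuous_const.mul ((continuous_apply v0).comp (hval 0))).mul continuous_const)
    (fun k => by positivity)
    (tendsto_pow_atTop_nhds_zero_of_lt_one (by norm_num) (by norm_num)) fun k hk ψ => ?_
  rw [mul_assoc, ← pow_add]
  exact hc.dist_applyChain_chainLimit_le ψ.2 n k (by omega)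

lemma chainLimit_add_smul (hc : IsTailControlled v0 M M' h C N) (hψ : ψ ∈ InvLimit M')
    (hφ : φ ∈ InvLimit M') (s t : ℝ) :
    chainLimit M (s • ψ + t • φ) = s • chainLimit M ψ + t • chainLimit M φ := by
  funext n
  refine Tendsto.limUnder_eq ?_
  simp_rw [Pi.add_apply, Pi.smul_apply, applyChain_add_smul]
  exact ((hc.tendsto_chainLimit hψ n).const_smul s).add ((hc.tendsto_chainLimit hφ n).const_smul t)

def homeomorph (hc : IsTailControlled v0 M M' h C N) (hc' : IsTailControlled v0 M' M h C N)
    (hM : ∀ n v w, 0 ≤ M n v w) (hM' : ∀ n v w, 0 ≤ M' n v w) : InvLimit M' ≃ₜ InvLimit M where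
  toFun ψ := ⟨chainLimit M ψ, hc.chainLimit_mem hM ψ.2⟩
  invFun φ := ⟨chainLimit M' φ, hc'.chainLimit_mem hM' φ.2⟩
  left_inv ψ := Subtype.ext (hc.chainLimit_chainLimit ψ.2)
  right_inv φ := Subtype.ext (hc'.chainLimit_chainLimit φ.2)
  continuous_toFun := hc.continuous_chainLimit.subtype_mk _
  continuous_invFun := hc'.continuous_chainLimit.subtype_mk _

end IsTailControlled

end TailControl

section Perturbation

variable {L : ℕ → Type} [∀ n, Fintype (L n)] {v0 : L 0} {A M M' : ∀ n, L n → L (n+1) → ℝ}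
  {ε : ℕ → ℝ} {N : ℕ} {h : ℕ → ℝ} {C : ℝ}

lemma IsTailControlled.of_opNorm_sub_le (hA : IsProjSystem v0 A)
    (hεsmall : ∀ n : ℕ, N ≤ n + 1 →
      ε n ≤ ((2 : ℝ) ^ (n + 1))⁻¹ * (Lconst v0 A (n + 1) * ∏ j ∈ range n, (opNorm (A j) + 1))⁻¹)
    (hM' : ∀ n v w, 0 ≤ M' n v w) (hAM' : ∀ k (w : L k), pathMat A k v0 w ≤ pathMat M' k v0 w)
    (hclose : ∀ n, N ≤ n + 1 → opNorm (M n - M' n) ≤ ε n)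
    (hh : ∀ j, 1 ≤ h j) (hMh : ∀ j, opNorm (M j) ≤ h j) (hM'h : ∀ j, opNorm (M' j) ≤ h j)
    (hC : 0 ≤ C) (hprod : ∀ m, ∏ j ∈ range m, h j ≤ C * ∏ j ∈ range m, (opNorm (A j) + 1)) :
    IsTailControlled v0 M M' h C N where
  one_le_weight := hh
  opNorm_le := hMh
  opNorm_le' := hM'h
  tail ψ hψ m hm := by
    set P := ∏ j ∈ range m, (opNorm (A j) + 1)
    set Lc := Lconst v0 A (m+1)
    have hP : 0 ≤ P := prod_nonneg fun j _ => by linarith [opNorm_nonneg (A j)]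
    have hLc : 0 ≤ Lc := mul_nonneg (Real.sqrt_nonneg _)
      (Real.iSup_nonneg fun w => inv_nonneg.2 (pathMat_nonneg hA.1 _ v0 w))
    have hε : ε m * (Lc * P) ≤ 2⁻¹ ^ (m+1) := by
      rcases (mul_nonneg hLc hP).eq_or_lt with h0 | hpos
      · rw [← h0, mul_zero]; positivity
      · rw [inv_pow, ← le_mul_inv_iff₀ hpos]; exact hεsmall m hm
    have hψ0 : 0 ≤ ψ 0 v0 := hψ.1 0 v0
    calc (∏ j ∈ range m, h j) * opNorm (M m - M' m) * euclEnorm (ψ (m+1))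
        ≤ (C * P) * ε m * (Lc * ψ 0 v0) := by
          have hCP : 0 ≤ C * P := mul_nonneg hC hP
          exact mul_le_mul (mul_le_mul (hprod m) (hclose m hm) (opNorm_nonneg _) hCP)
            (euclEnorm_le_Lconst_mul hA hM' hAM' hψ (m+1)) (euclEnorm_nonneg _)
            (mul_nonneg hCP ((opNorm_nonneg _).trans (hclose m hm)))
      _ = C * ψ 0 v0 * (ε m * (Lc * P)) := by ring
      _ ≤ C * ψ 0 v0 * 2⁻¹ ^ (m+1) := mul_le_mul_of_nonneg_left hε (mul_nonneg hC hψ0)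

/-- The factor `‖B j‖ + 1` is only needed below `N`, where `B` need not be close to `A`. -/
def perturbWeight (A B : ∀ n, L n → L (n+1) → ℝ) (N j : ℕ) : ℝ :=
  (opNorm (A j) + 1) * if j < N then opNorm (B j) + 1 else 1

variable {B : ∀ n, L n → L (n+1) → ℝ}

lemma one_le_perturbWeight (j : ℕ) : 1 ≤ perturbWeight A B N j := by
  have := opNorm_nonneg (A j)
  have := opNorm_nonneg (B j)
  unfold perturbWeight
  split_ifs <;> nlinarith

lemma opNorm_le_perturbWeight_left (j : ℕ) : opNorm (A j) ≤ perturbWeight A B N j := by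
  have := opNorm_nonneg (A j)
  have := opNorm_nonneg (B j)
  unfold perturbWeight
  split_ifs <;> nlinarith

lemma opNorm_le_perturbWeight_right (hAB : ∀ j, N ≤ j → opNorm (A j - B j) ≤ 1) (j : ℕ) :
    opNorm (B j) ≤ perturbWeight A B N j := by
  have := opNorm_nonneg (A j)
  have := opNorm_nonneg (B j)
  unfold perturbWeight
  split_ifs with hj
  · nlinarith
  · linarith [opNorm_le_add_opNorm_sub (A j) (B j), hAB j (not_lt.1 hj)]

lemma prod_perturbWeight_le (m : ℕ) :
    ∏ j ∈ range m, perturbWeight A B N j ≤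
      (∏ j ∈ range N, (opNorm (B j) + 1)) * ∏ j ∈ range m, (opNorm (A j) + 1) := by
  have hB : ∀ j, 1 ≤ opNorm (B j) + 1 := fun j => by linarith [opNorm_nonneg (B j)]
  have hfilter : ∏ j ∈ range m, (if j < N then opNorm (B j) + 1 else 1) ≤
      ∏ j ∈ range N, (opNorm (B j) + 1) := by
    rw [prod_ite, prod_const_one, mul_one]
    exact prod_le_prod_of_subset_of_one_le (fun j hj => mem_range.2 (mem_filter.1 hj).2)
      (fun j _ => zero_le_one.trans (hB j)) fun j _ _ => hB j
  unfold perturbWeight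
  rw [prod_mul_distrib, mul_comm]
  exact mul_le_mul_of_nonneg_right hfilter
    (prod_nonneg fun j _ => by linarith [opNorm_nonneg (A j)])

end Perturbation

theorem stmt_14_general {L : ℕ → Type} [∀ n, Fintype (L n)]
    (v0 : L 0)
    (A B : ∀ n, L n → L (n+1) → ℝ)
    (hA : IsProjSystem v0 A) (hB : IsProjSystem v0 B)
    (ε : ℕ → ℝ) (hε : ∀ k, 0 < ε k ∧ ε k < 1)
    (N : ℕ)
    (hεsmall : ∀ n : ℕ, N ≤ n + 1 →
      ε n ≤ ((2 : ℝ) ^ (n + 1))⁻¹ *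
        (Lconst v0 A (n + 1) * ∏ j ∈ Finset.range n, (opNorm (A j) + 1))⁻¹)
    (hBA : ∀ j : ℕ, ∀ w : L j, pathMat A j v0 w ≤ pathMat B j v0 w)
    (hclose : ∀ n : ℕ, N ≤ n + 1 →
      opNorm (fun v w => A n v w - B n v w) ≤ ε n) :
    ∃ e : ↥(InvLimit A) ≃ₜ ↥(InvLimit B),
      (∀ ψ : ↥(InvLimit A), ∀ n : ℕ,
        Filter.Tendsto
          (fun k => applyChain B n (k + 1) ((ψ : ∀ n, L n → ℝ) (n + (k + 1))))
          Filter.atTop (nhds ((e ψ : ∀ n, L n → ℝ) n))) ∧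
      (∀ ψ φ : ↥(InvLimit A), ∀ t : ℝ, 0 ≤ t → t ≤ 1 →
        ∀ h : t • (ψ : ∀ n, L n → ℝ) + (1 - t) • (φ : ∀ n, L n → ℝ) ∈ InvLimit A,
          ((e ⟨_, h⟩ : ∀ n, L n → ℝ)) =
            t • (e ψ : ∀ n, L n → ℝ) + (1 - t) • (e φ : ∀ n, L n → ℝ)) := by
  have hAB : ∀ j, N ≤ j → opNorm (A j - B j) ≤ 1 :=
    fun j hj => (hclose j (by omega)).trans (hε j).2.le
  have hC : 0 ≤ ∏ j ∈ range N, (opNorm (B j) + 1) :=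
    prod_nonneg fun j _ => by linarith [opNorm_nonneg (B j)]
  have hT : IsTailControlled v0 B A (perturbWeight A B N) _ N :=
    .of_opNorm_sub_le hA hεsmall hA.1 (fun _ _ => le_rfl)
      (fun n hn => (opNorm_sub_comm _ _).trans_le (hclose n hn)) one_le_perturbWeight
      (opNorm_le_perturbWeight_right hAB) opNorm_le_perturbWeight_left hC prod_perturbWeight_le
  have hS : IsTailControlled v0 A B (perturbWeight A B N) _ N :=
    .of_opNorm_sub_le hA hεsmall hB.1 hBA hclose one_le_perturbWeight
      opNorm_le_perturbWeight_left (opNorm_le_perturbWeight_right hAB) hC prod_perturbWeight_le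
  exact ⟨hT.homeomorph hS hB.1 hA.1,
    fun ψ n => (tendsto_add_atTop_iff_nat 1).2 (hT.tendsto_chainLimit ψ.2 n),
    fun ψ φ t _ _ _ => hT.chainLimit_add_smul ψ.2 φ.2 t (1 - t)⟩

/-- Lemma 5.2: under the stated assumptions, the map
`(Tψ)^{j-1} = lim_k B^(j) ⋯ B^(j+k) ψ^{j+k}` is an affine homeomorphism
`lim_j A^(j) → lim_j B^(j)`. -/
theorem stmt_14 {L : ℕ → Type} [∀ n, Fintype (L n)] [∀ n, Nonempty (L n)]
    (v0 : L 0) (hsing : ∀ v : L 0, v = v0)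
    (A B : ∀ n, L n → L (n+1) → ℝ)
    (hA : IsProjSystem v0 A) (hB : IsProjSystem v0 B)
    (ε : ℕ → ℝ) (hε : ∀ k, 0 < ε k ∧ ε k < 1)
    (N : ℕ)
    (hεsmall : ∀ n : ℕ, N ≤ n + 1 →
      ε n ≤ ((2 : ℝ) ^ (n + 1))⁻¹ *
        (Lconst v0 A (n + 1) * ∏ j ∈ Finset.range n, (opNorm (A j) + 1))⁻¹)
    (hBA : ∀ j : ℕ, ∀ w : L j, pathMat A j v0 w ≤ pathMat B j v0 w)
    (hclose : ∀ n : ℕ, N ≤ n + 1 →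
      opNorm (fun v w => A n v w - B n v w) ≤ ε n) :
    ∃ e : ↥(InvLimit A) ≃ₜ ↥(InvLimit B),
      (∀ ψ : ↥(InvLimit A), ∀ n : ℕ,
        Filter.Tendsto
          (fun k => applyChain B n (k + 1) ((ψ : ∀ n, L n → ℝ) (n + (k + 1))))
          Filter.atTop (nhds ((e ψ : ∀ n, L n → ℝ) n))) ∧
      (∀ ψ φ : ↥(InvLimit A), ∀ t : ℝ, 0 ≤ t → t ≤ 1 →
        ∀ h : t • (ψ : ∀ n, L n → ℝ) + (1 - t) • (φ : ∀ n, L n → ℝ) ∈ InvLimit A,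
          ((e ⟨_, h⟩ : ∀ n, L n → ℝ)) =
            t • (e ψ : ∀ n, L n → ℝ) + (1 - t) • (e φ : ∀ n, L n → ℝ)) :=
  stmt_14_general v0 A B hA hB ε hε N hεsmall hBA hclose
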